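/- Let a, a', c, c' ∈ ℝ² with a ≠ a' and c ≠ c', such that the perpendicular bisector of a,a' and the perpendicular bisector of c,c' are parallel (disjoint). If b, d ∈ ℝ² satisfy that the bisector of a,b equals the bisector of c,d, the bisector of a',b equals the bisector of c',d, and these two lines are parallel (disjoint), then b lies on the line through a and a', and d lies on the line through c and c'. -/
import Mathlib

/-- The perpendicular bisector of two points in the Euclidean plane,
as the set of points equidistant from both. -/
def bisector (p q : EuclideanSpace ℝ (Fin 2)) : Set (EuclideanSpace ℝ (Fin 2)) :=
  {x | dist x p = dist x q}

open AffineSubspace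

lemma bisector_eq_perpBisector (p q : EuclideanSpace ℝ (Fin 2)) :
    bisector p q = (perpBisector p q : Set (EuclideanSpace ℝ (Fin 2))) := by
  ext x
  simp [bisector, mem_perpBisector_iff_dist_eq]

/-- Disjoint bisectors have parallel normals. -/
lemma parallel_of_disjoint {p q p' q' : EuclideanSpace ℝ (Fin 2)}
    (h : bisector p q ∩ bisector p' q' = ∅) :
    ∃ s : ℝ, q -ᵥ p = s • (q' -ᵥ p') ∨ q' -ᵥ p' = s • (q -ᵥ p) := by
  rw [bisector_eq_perpBisector, bisector_eq_perpBisector] at h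
  have hlt := AffineSubspace.sup_direction_lt_of_nonempty_of_inter_empty
    (perpBisector_nonempty (p₁ := p) (p₂ := q))
    (perpBisector_nonempty (p₁ := p') (p₂ := q')) h
  rw [direction_perpBisector, direction_perpBisector] at hlt
  set U : Submodule ℝ (EuclideanSpace ℝ (Fin 2)) := ℝ ∙ (q -ᵥ p)
  set W : Submodule ℝ (EuclideanSpace ℝ (Fin 2)) := ℝ ∙ (q' -ᵥ p')
  have hlt' : Uᗮ ⊔ Wᗮ < ⊤ := lt_of_lt_of_le hlt le_top
  have hne : (Uᗮ ⊔ Wᗮ)ᗮ ≠ ⊥ := by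
    intro hbot
    exact hlt'.ne (Submodule.orthogonal_eq_bot_iff.mp hbot)
  have heq : (Uᗮ ⊔ Wᗮ)ᗮ = U ⊓ W := by
    rw [← Submodule.inf_orthogonal, Submodule.orthogonal_orthogonal,
      Submodule.orthogonal_orthogonal]
  rw [heq] at hne
  obtain ⟨x, hx, hx0⟩ := Submodule.exists_mem_ne_zero_of_ne_bot hne
  obtain ⟨s, hs⟩ := Submodule.mem_span_singleton.mp (Submodule.mem_inf.mp hx).1
  obtain ⟨t, ht⟩ := Submodule.mem_span_singleton.mp (Submodule.mem_inf.mp hx).2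
  have hs0 : s ≠ 0 := by rintro rfl; simp [← hs] at hx0
  refine ⟨s⁻¹ * t, Or.inl ?_⟩
  have : s • (q -ᵥ p) = t • (q' -ᵥ p') := by rw [hs, ht]
  calc q -ᵥ p = s⁻¹ • (s • (q -ᵥ p)) := by rw [smul_smul, inv_mul_cancel₀ hs0, one_smul]
    _ = s⁻¹ • (t • (q' -ᵥ p')) := by rw [this]
    _ = (s⁻¹ * t) • (q' -ᵥ p') := by rw [smul_smul]

lemma collinear_of_dep {a a' b : EuclideanSpace ℝ (Fin 2)} (s : ℝ)
    (h : b -ᵥ a = s • (b -ᵥ a') ∨ b -ᵥ a' = s • (b -ᵥ a)) :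
    Collinear ℝ ({a, a', b} : Set (EuclideanSpace ℝ (Fin 2))) := by
  have hb : b ∈ ({a, a', b} : Set (EuclideanSpace ℝ (Fin 2))) := by simp
  rw [collinear_iff_of_mem hb]
  rcases h with h | h
  · refine ⟨b -ᵥ a', ?_⟩
    rintro p (rfl | rfl | rfl)
    · exact ⟨-s, by rw [neg_smul, ← h]; simp⟩
    · exact ⟨-1, by simp⟩
    · exact ⟨0, by simp⟩
  · refine ⟨b -ᵥ a, ?_⟩
    rintro p (rfl | rfl | rfl)
    · exact ⟨-1, by simp⟩
    · exact ⟨-s, by rw [neg_smul, ← h]; simp⟩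
    · exact ⟨0, by simp⟩

theorem stmt_13 (a a' c c' b d : EuclideanSpace ℝ (Fin 2))
    (haa' : a ≠ a') (hcc' : c ≠ c')
    (hpar : bisector a a' ∩ bisector c c' = ∅)
    (hab : a ≠ b) (hcd : c ≠ d) (ha'b : a' ≠ b) (hc'd : c' ≠ d)
    (h1 : bisector a b = bisector c d)
    (h2 : bisector a' b = bisector c' d)
    (hpar' : bisector a b ∩ bisector a' b = ∅) :
    Collinear ℝ ({a, a', b} : Set (EuclideanSpace ℝ (Fin 2))) ∧
    Collinear ℝ ({c, c', d} : Set (EuclideanSpace ℝ (Fin 2))) := by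
  constructor
  · obtain ⟨s, hs⟩ := parallel_of_disjoint hpar'
    exact collinear_of_dep s hs
  · have hpar'' : bisector c d ∩ bisector c' d = ∅ := by rw [← h1, ← h2]; exact hpar'
    obtain ⟨s, hs⟩ := parallel_of_disjoint hpar''
    exact collinear_of_dep s hs
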